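/- arXiv:1612.00050 — 4 statements merged into one kernel-verified Lean document; each statement's English description precedes it below -/
import Mathlib

section
/- Let α¹,…,αⁿ ∈ ℝ^d be linearly independent vectors, let β ∈ ℝ^d, let ε ∈ (0,1)^d, and suppose there is K ∈ (0,1) such that K·ε^β ≤ ε^{α^k} ≤ ε^β for all 1 ≤ k ≤ n (where ε^α denotes ∏_j ε_j^{α_j}). Then there exists b ∈ (0,1), depending only on α¹,…,αⁿ and K (not on ε), and a vector y ∈ [b, b⁻¹]^d such that y^{α^k} = ε^{α^k − β} for all 1 ≤ k ≤ n. -/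
/-!
Taking logarithms, `y = exp s` solves the system iff `∑ⱼ αᵏⱼ sⱼ = cₖ` with
`cₖ = ∑ⱼ (αᵏⱼ - βⱼ) log εⱼ`, and the hypothesis says exactly that `|cₖ| ≤ -log K`.
Since the rows `αᵏ` are independent the matrix is surjective, so by the open mapping theorem
it has solutions with `‖s‖∞ ≤ C ‖c‖∞` for a constant `C` depending only on the `αᵏ`;
then `y ∈ [K^C, K^{-C}]^d`.
-/

open Finset Real Matrix

theorem Matrix.range_mulVecLin_eq_top_of_linearIndependent_row {m n K : Type*} [Fintype m]
    [Fintype n] [Field K] {M : Matrix m n K} (h : LinearIndependent K M.row) :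
    LinearMap.range M.mulVecLin = ⊤ :=
  Submodule.eq_top_of_finrank_eq <| by
    rw [← Matrix.rank, h.rank_matrix, Module.finrank_fintype_fun_eq_card]

theorem Matrix.exists_mulVec_eq_norm_le {m n : Type*} [Fintype m] [Fintype n]
    {M : Matrix m n ℝ} (h : LinearIndependent ℝ M.row) :
    ∃ C > 0, ∀ c, ∃ s, M *ᵥ s = c ∧ ‖s‖ ≤ C * ‖c‖ := by
  have hsurj : Function.Surjective (LinearMap.toContinuousLinearMap M.mulVecLin) :=
    LinearMap.range_eq_top.1 (range_mulVecLin_eq_top_of_linearIndependent_row h)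
  exact ContinuousLinearMap.exists_preimage_norm_le _ hsurj

theorem prod_rpow_eq_exp_sum {ι : Type*} (s : Finset ι) {x : ι → ℝ} (hx : ∀ i ∈ s, 0 < x i)
    (a : ι → ℝ) : ∏ i ∈ s, x i ^ a i = exp (∑ i ∈ s, a i * log (x i)) := by
  rw [exp_sum]
  exact prod_congr rfl fun i hi => by rw [rpow_def_of_pos (hx i hi), mul_comm]

theorem abs_sub_le_neg_log_of_mul_exp_le {K a b : ℝ} (hK : 0 < K) (h₁ : K * exp b ≤ exp a)
    (h₂ : exp a ≤ exp b) : |a - b| ≤ -log K := by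
  have hlow : log K + b ≤ a := by
    simpa [log_mul hK.ne' (exp_pos b).ne'] using log_le_log (by positivity) h₁
  have hhigh : a ≤ b := exp_le_exp.1 h₂
  rw [abs_le]
  constructor <;> linarith

theorem rpow_le_exp_and_exp_le_inv_rpow {K ρ t : ℝ} (hK : 0 < K) (ht : |t| ≤ ρ * -log K) :
    K ^ ρ ≤ exp t ∧ exp t ≤ (K ^ ρ)⁻¹ := by
  rw [rpow_def_of_pos hK, ← exp_neg, exp_le_exp, exp_le_exp]
  constructor <;> linarith [abs_le.1 ht]

/-- Proposition 3.1 (first part). Given linearly independent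
`α¹,…,αⁿ` and `K ∈ (0,1)`, there is `b ∈ (0,1)` depending only on the `αᵏ` and `K`
such that whenever `ε ∈ (0,1)^d` and `β` satisfy `K ε^β ≤ ε^{αᵏ} ≤ ε^β` for all `k`,
there is `y ∈ [b, b⁻¹]^d` with `y^{αᵏ} = ε^{αᵏ - β}` for all `k`. -/
theorem stmt0 (d n : ℕ) (α : Fin n → Fin d → ℝ) (hα : LinearIndependent ℝ α)
    (K : ℝ) (hK : 0 < K) (hK1 : K < 1) :
    ∃ b : ℝ, 0 < b ∧ b < 1 ∧
      ∀ (β ε : Fin d → ℝ), (∀ j, 0 < ε j ∧ ε j < 1) →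
        (∀ k, K * ∏ j, ε j ^ β j ≤ ∏ j, ε j ^ α k j ∧
              ∏ j, ε j ^ α k j ≤ ∏ j, ε j ^ β j) →
        ∃ y : Fin d → ℝ, (∀ j, b ≤ y j ∧ y j ≤ b⁻¹) ∧
          ∀ k, ∏ j, y j ^ α k j = ∏ j, ε j ^ (α k j - β j) := by
  obtain ⟨C, hC, hsolve⟩ := exists_mulVec_eq_norm_le (M := of α) hα
  have hlogK : 0 < -log K := neg_pos.2 (log_neg hK hK1)
  refine ⟨K ^ C, rpow_pos_of_pos hK _, rpow_lt_one hK.le hK1 hC, ?_⟩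
  intro β ε hε hbound
  have hε' : ∀ j ∈ univ, 0 < ε j := fun j _ => (hε j).1
  set c : Fin n → ℝ := fun k => ∑ j, (α k j - β j) * log (ε j)
  have hc : ‖c‖ ≤ -log K := by
    refine (pi_norm_le_iff_of_nonneg hlogK.le).2 fun k => ?_
    obtain ⟨h₁, h₂⟩ := hbound k
    rw [prod_rpow_eq_exp_sum _ hε', prod_rpow_eq_exp_sum _ hε'] at h₁ h₂
    simpa [c, sub_mul, sum_sub_distrib] using abs_sub_le_neg_log_of_mul_exp_le hK h₁ h₂
  obtain ⟨s, hs, hsc⟩ := hsolve c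
  refine ⟨fun j => exp (s j), fun j => rpow_le_exp_and_exp_le_inv_rpow hK ?_, fun k => ?_⟩
  · calc |s j| ≤ ‖s‖ := norm_le_pi_norm s j
      _ ≤ C * -log K := hsc.trans (by gcongr)
  · rw [prod_rpow_eq_exp_sum _ fun j _ => exp_pos (s j), prod_rpow_eq_exp_sum _ hε']
    simp_rw [log_exp]
    exact congrArg exp (congrFun hs k)
end

section
/- Let P ⊆ ℝ_{≥0}^d be a closed convex set which is upward closed (P + ℝ_{≥0}^d ⊆ P). Define the dual P* = { w ∈ ℝ_{≥0}^d : ⟨α, w⟩ ≥ 1 for all α ∈ P }. Then the double dual P** (defined the same way from P*) equals P, provided P is nonempty and does not contain the origin. -/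
open Finset

/-- The dual of a subset of `ℝ_{≥0}^d`:
`P* = { w ∈ ℝ_{≥0}^d : ⟨α, w⟩ ≥ 1 for all α ∈ P }`. -/
def nDual (d : ℕ) (P : Set (Fin d → ℝ)) : Set (Fin d → ℝ) :=
  {w | (∀ i, 0 ≤ w i) ∧ ∀ a ∈ P, 1 ≤ ∑ i, a i * w i}

/-- for a nonempty closed convex upward-closed subset `P` of the
nonnegative orthant not containing the origin, the double dual equals `P`. -/
theorem stmt2 (d : ℕ) (P : Set (Fin d → ℝ))
    (hpos : ∀ x ∈ P, ∀ i, 0 ≤ x i) (hclosed : IsClosed P) (hconv : Convex ℝ P)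
    (hup : ∀ x ∈ P, ∀ t : Fin d → ℝ, (∀ i, 0 ≤ t i) → x + t ∈ P)
    (hne : P.Nonempty) (h0 : (0 : Fin d → ℝ) ∉ P) :
    nDual d (nDual d P) = P := by
  apply Set.Subset.antisymm
  · intro b hb
    by_contra hbP
    obtain ⟨f, u, hfb, hfa⟩ := geometric_hahn_banach_point_closed hconv hclosed hbP
    set y : Fin d → ℝ := fun i => f (Pi.single i 1) with hy
    have hsingle : ∀ (x : Fin d → ℝ) (i : Fin d),
        Pi.single i (x i) = x i • (Pi.single i 1 : Fin d → ℝ) := by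
      intro x i; funext j
      by_cases h : j = i <;> simp [Pi.single_apply, h]
    have hfx : ∀ x : Fin d → ℝ, f x = ∑ i, x i * y i := by
      intro x
      conv_lhs => rw [← Finset.univ_sum_single x]
      rw [map_sum]
      refine Finset.sum_congr rfl fun i _ => ?_
      rw [hsingle x i, map_smul]
      simp [hy, mul_comm]
    obtain ⟨a, ha⟩ := hne
    have hy0 : ∀ i, 0 ≤ y i := by
      intro i
      by_contra hneg
      push_neg at hneg
      set t : ℝ := (u - f a) / y i with ht
      have ht0 : 0 ≤ t :=
        (div_pos_of_neg_of_neg (by linarith [hfa a ha]) hneg).le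
      have hmem : a + t • (Pi.single i 1 : Fin d → ℝ) ∈ P := by
        apply hup a ha
        intro j
        by_cases h : j = i <;> simp [Pi.single_apply, h, ht0]
      have := hfa _ hmem
      rw [map_add, map_smul] at this
      have hyi : f (Pi.single i (1:ℝ)) = y i := rfl
      rw [hyi] at this
      have : u < f a + (u - f a) := by
        have ht' : t * y i = u - f a := by
          rw [ht, div_mul_cancel₀ _ hneg.ne]
        simpa [smul_eq_mul, ht'] using this
      linarith
    have hfb0 : 0 ≤ f b := by
      rw [hfx]
      exact Finset.sum_nonneg fun i _ => mul_nonneg (hb.1 i) (hy0 i)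
    have hu : 0 < u := lt_of_le_of_lt hfb0 hfb
    have hw : (fun i => y i / u) ∈ nDual d P := by
      constructor
      · intro i; exact div_nonneg (hy0 i) hu.le
      · intro a' ha'
        have : (1:ℝ) ≤ f a' / u := (one_le_div hu).2 (hfa a' ha').le
        calc (1:ℝ) ≤ f a' / u := this
          _ = ∑ i, a' i * (y i / u) := by
              rw [hfx, Finset.sum_div]
              exact Finset.sum_congr rfl fun i _ => by ring
    have h1 := hb.2 _ hw
    have : ∑ i, y i / u * b i = f b / u := by
      rw [hfx, Finset.sum_div]
      exact Finset.sum_congr rfl fun i _ => by ring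
    rw [this] at h1
    have := (one_le_div hu).1 h1
    linarith
  · intro x hx
    exact ⟨hpos x hx, fun w hw => by simpa [mul_comm] using hw.2 x hx⟩
end

section
/- Let v¹,…,v^ℓ ∈ ℝ^ℓ be vectors and θ₀, θ₁,…,θ_ℓ > 0 with θ₀·(−u) + Σ_{i=1}^ℓ θ_i v^i = 0 for some u ∈ ℝ^ℓ, where the vectors v¹,…,v^ℓ are linearly independent. Then sup over unit vectors y ∈ ℝ^ℓ of min( −⟨u, y⟩, min_{1≤i≤ℓ} ⟨v^i, y⟩ ) is strictly negative; consequently there exists c > 0 such that for all y ∈ ℝ^ℓ, min( −⟨u, y⟩, min_i ⟨v^i, y⟩ ) ≤ −c‖y‖₂. -/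
/-!
If `y ≠ 0` had `-⟪u, y⟫ ≥ 0` and `⟪vⁱ, y⟫ ≥ 0` for all `i`, pairing the relation
`θ₀ u = Σ θᵢ vⁱ` with `y` would force every `⟪vⁱ, y⟫` to vanish; since the `vⁱ` span
the space, `y = 0`. So the continuous, positively homogeneous function
`y ↦ min (-⟪u, y⟫) (minᵢ ⟪vⁱ, y⟫)` is negative off the origin, its maximum `-c` on the
compact unit sphere is negative, and homogeneity gives the bound `-c ‖y‖` everywhere.
-/

open Finset Metric Submodule Set
open scoped RealInnerProductSpace

theorem eq_zero_of_forall_inner_eq_zero_of_span_eq_top {𝕜 E ι : Type*} [RCLike 𝕜]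
    [NormedAddCommGroup E] [InnerProductSpace 𝕜 E] {v : ι → E}
    (hv : span 𝕜 (range v) = ⊤) {y : E} (hy : ∀ i, inner 𝕜 (v i) y = 0) : y = 0 := by
  have hperp : span 𝕜 (range v) ≤ (𝕜 ∙ y)ᗮ :=
    span_le.2 <| range_subset_iff.2 fun i => mem_orthogonal_singleton_iff_inner_left.2 (hy i)
  have hy_perp : y ∈ (𝕜 ∙ y)ᗮ := hperp (hv ▸ mem_top)
  exact inner_self_eq_zero.1 (mem_orthogonal_singleton_iff_inner_left.1 hy_perp)

section MinInner

variable {E ι : Type*} [NormedAddCommGroup E] [InnerProductSpace ℝ E]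

theorem eq_zero_of_inner_nonpos_of_forall_inner_nonneg [Fintype ι] {u : E} {v : ι → E}
    {θ₀ : ℝ} {θ : ι → ℝ} (hθ₀ : 0 < θ₀) (hθ : ∀ i, 0 < θ i)
    (hspan : span ℝ (range v) = ⊤) (hu : θ₀ • u = ∑ i, θ i • v i) {y : E}
    (huy : ⟪u, y⟫ ≤ 0) (hvy : ∀ i, 0 ≤ ⟪v i, y⟫) : y = 0 := by
  have hterm : ∀ i, 0 ≤ θ i * ⟪v i, y⟫ := fun i => mul_nonneg (hθ i).le (hvy i)
  have hpair : ∑ i, θ i * ⟪v i, y⟫ = θ₀ * ⟪u, y⟫ := by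
    simpa only [sum_inner, real_inner_smul_left] using congrArg (⟪·, y⟫) hu.symm
  have hzero : ∀ i, θ i * ⟪v i, y⟫ = 0 := fun i =>
    (sum_eq_zero_iff_of_nonneg fun i _ => hterm i).1
      (le_antisymm (hpair ▸ mul_nonpos_of_nonneg_of_nonpos hθ₀.le huy)
        (sum_nonneg fun i _ => hterm i)) i (mem_univ i)
  exact eq_zero_of_forall_inner_eq_zero_of_span_eq_top hspan fun i =>
    (mul_eq_zero.1 (hzero i)).resolve_left (hθ i).ne'

noncomputable def minInner (u : E) (v : ι → E) (y : E) : ℝ :=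
  min (-⟪u, y⟫) (⨅ i, ⟪v i, y⟫)

theorem minInner_neg_of_ne_zero [Fintype ι] {u : E} {v : ι → E} {θ₀ : ℝ} {θ : ι → ℝ}
    (hθ₀ : 0 < θ₀) (hθ : ∀ i, 0 < θ i) (hspan : span ℝ (range v) = ⊤)
    (hu : θ₀ • u = ∑ i, θ i • v i) {y : E} (hy : y ≠ 0) : minInner u v y < 0 := by
  by_contra! h
  refine hy (eq_zero_of_inner_nonpos_of_forall_inner_nonneg hθ₀ hθ hspan hu ?_ fun i => ?_)
  · exact neg_nonneg.1 (h.trans (min_le_left _ _))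
  · exact (h.trans (min_le_right _ _)).trans (ciInf_le (Finite.bddBelow_range _) i)

theorem continuous_minInner [Fintype ι] [Nonempty ι] (u : E) (v : ι → E) :
    Continuous (minInner u v) := by
  have hinf : Continuous fun y => ⨅ i, ⟪v i, y⟫ := by
    simp only [← inf'_univ_eq_ciInf]
    exact Continuous.finset_inf'_apply univ_nonempty fun i _ =>
      continuous_const.inner continuous_id
  exact (continuous_const.inner continuous_id).neg.min hinf

theorem minInner_smul (u : E) (v : ι → E) (t : ℝ) (ht : 0 ≤ t) (y : E) :
    minInner u v (t • y) = t * minInner u v y := by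
  simp only [minInner, real_inner_smul_right]
  rw [mul_min_of_nonneg _ _ ht, Real.mul_iInf_of_nonneg ht, mul_neg]

end MinInner

theorem le_mul_norm_of_isMaxOn_sphere {F : Type*} [NormedAddCommGroup F] [NormedSpace ℝ F]
    {f : F → ℝ} (hf : ∀ t : ℝ, 0 ≤ t → ∀ y, f (t • y) = t * f y) {y₀ : F}
    (hmax : IsMaxOn f (sphere 0 1) y₀) (y : F) : f y ≤ f y₀ * ‖y‖ := by
  rcases eq_or_ne y 0 with rfl | hy
  · have hf0 : f 0 = 0 := by simpa using hf 0 le_rfl 0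
    simp [hf0]
  have hnorm : 0 < ‖y‖ := norm_pos_iff.2 hy
  have hunit : ‖y‖⁻¹ • y ∈ sphere (0 : F) 1 := by
    rw [mem_sphere_zero_iff_norm, norm_smul, norm_inv, norm_norm, inv_mul_cancel₀ hnorm.ne']
  calc f y = ‖y‖ * f (‖y‖⁻¹ • y) := by
        rw [← hf _ hnorm.le, smul_smul, mul_inv_cancel₀ hnorm.ne', one_smul]
    _ ≤ ‖y‖ * f y₀ := mul_le_mul_of_nonneg_left (hmax hunit) hnorm.le
    _ = f y₀ * ‖y‖ := mul_comm _ _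

/-- if `0 = θ₀(-u) + Σ θ_i vⁱ` with all weights positive and the `vⁱ`
linearly independent, then the sup over unit vectors of
`min(-⟨u,y⟩, min_i ⟨vⁱ,y⟩)` is strictly negative, and consequently there is `c > 0`
with `min(-⟨u,y⟩, min_i ⟨vⁱ,y⟩) ≤ -c‖y‖` for all `y`. -/
theorem stmt4 (ℓ : ℕ) (hℓ : 0 < ℓ) (v : Fin ℓ → EuclideanSpace ℝ (Fin ℓ))
    (u : EuclideanSpace ℝ (Fin ℓ)) (θ₀ : ℝ) (θ : Fin ℓ → ℝ)
    (hθ₀ : 0 < θ₀) (hθ : ∀ i, 0 < θ i) (hv : LinearIndependent ℝ v)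
    (hsum : θ₀ • (-u) + ∑ i, θ i • v i = 0) :
    sSup {m : ℝ | ∃ y : EuclideanSpace ℝ (Fin ℓ), ‖y‖ = 1 ∧
        m = min (-(inner ℝ u y : ℝ)) (⨅ i, (inner ℝ (v i) y : ℝ))} < 0 ∧
    ∃ c : ℝ, 0 < c ∧ ∀ y : EuclideanSpace ℝ (Fin ℓ),
      min (-(inner ℝ u y : ℝ)) (⨅ i, (inner ℝ (v i) y : ℝ)) ≤ -c * ‖y‖ := by
  have : Nonempty (Fin ℓ) := ⟨⟨0, hℓ⟩⟩
  have : Nontrivial (EuclideanSpace ℝ (Fin ℓ)) :=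
    Module.nontrivial_of_finrank_pos (R := ℝ) (by simpa using hℓ)
  have hspan : span ℝ (range v) = ⊤ := hv.span_eq_top_of_card_eq_finrank (by simp)
  have hu : θ₀ • u = ∑ i, θ i • v i := by
    rwa [smul_neg, neg_add_eq_zero] at hsum
  obtain ⟨y₀, hy₀, hmax⟩ := (isCompact_sphere 0 1).exists_isMaxOn
    (NormedSpace.sphere_nonempty.2 zero_le_one) (continuous_minInner u v).continuousOn
  have hneg : minInner u v y₀ < 0 :=
    minInner_neg_of_ne_zero hθ₀ hθ hspan hu (ne_zero_of_mem_unit_sphere ⟨y₀, hy₀⟩)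
  refine ⟨?_, -minInner u v y₀, neg_pos.2 hneg, fun y => ?_⟩
  · have hgreatest : IsGreatest {m : ℝ | ∃ y : EuclideanSpace ℝ (Fin ℓ), ‖y‖ = 1 ∧
        m = minInner u v y} (minInner u v y₀) :=
      ⟨⟨y₀, mem_sphere_zero_iff_norm.1 hy₀, rfl⟩, by
        rintro _ ⟨y, hy, rfl⟩
        exact hmax (mem_sphere_zero_iff_norm.2 hy)⟩
    exact hgreatest.csSup_eq ▸ hneg
  · rw [neg_neg]
    exact le_mul_norm_of_isMaxOn_sphere (minInner_smul u v) hmax y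
end

section
/- Let w ∈ ℝ_{≥0}^d satisfy ⟨α, w⟩ ≥ 1 for every α in the Taylor support S ⊂ ℕ^d of a real analytic function φ near 0 with φ(0)=0 and all elements of S having at least two strictly positive components. Then there exists δ > 0 such that for all sufficiently large |λ|, |λ φ(δ|λ|^{−w₁},…,δ|λ|^{−w_d})| ≤ 10^{−10}. -/
open Finset

private lemma abs_tsum_le_tsum_abs' {ι : Type*} {f : ι → ℝ}
    (h : Summable fun i => |f i|) : |∑' i, f i| ≤ ∑' i, |f i| := by
  simpa only [Real.norm_eq_abs] using
    norm_tsum_le_tsum_norm (f := f) (by simpa only [Real.norm_eq_abs] using h)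

/-- if `w ∈ ℝ_{≥0}^d` satisfies `⟨α, w⟩ ≥ 1` for every `α` in the
Taylor support `S` of a real analytic `φ = Σ_{α∈S} c_α x^α` (with every `α ∈ S`
having at least two strictly positive components), then there is `δ > 0` with
`|λ φ(δ|λ|^{-w})| ≤ 10^{-10}` for all sufficiently large `|λ|`. -/
theorem stmt16 (d : ℕ) (S : Set (Fin d → ℕ)) (c : (Fin d → ℕ) → ℝ)
    (hsupp : ∀ a, c a ≠ 0 ↔ a ∈ S)
    (hpos2 : ∀ a ∈ S, 2 ≤ (Finset.univ.filter fun i => 0 < a i).card)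
    (ρ : ℝ) (hρ : 0 < ρ)
    (hconv : Summable fun a : Fin d → ℕ => |c a| * ρ ^ (∑ i, a i))
    (w : Fin d → ℝ) (hw0 : ∀ i, 0 ≤ w i)
    (hw : ∀ a ∈ S, 1 ≤ ∑ i, (a i : ℝ) * w i) :
    ∃ δ : ℝ, 0 < δ ∧ ∃ Λ : ℝ, ∀ lam : ℝ, Λ ≤ |lam| →
      |lam * ∑' a : Fin d → ℕ, c a * ∏ i, (δ * |lam| ^ (-w i)) ^ a i|
        ≤ 1 / 10 ^ 10 := by
  set C := ∑' a : Fin d → ℕ, |c a| * ρ ^ (∑ i, a i) with hCdef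
  have hC0 : 0 ≤ C := tsum_nonneg fun a => by positivity
  set ε : ℝ := min 1 ((1 / 10 ^ 10) / (C + 1)) with hεdef
  have hε0 : 0 < ε := lt_min one_pos (by positivity)
  have hε1 : ε ≤ 1 := min_le_left _ _
  refine ⟨ε * ρ, by positivity, 1, fun lam hlam => ?_⟩
  have hL0 : (0 : ℝ) < |lam| := lt_of_lt_of_le one_pos hlam
  have key : ∀ a : Fin d → ℕ,
      |lam * (c a * ∏ i, (ε * ρ * |lam| ^ (-w i)) ^ a i)|
        ≤ ε ^ 2 * (|c a| * ρ ^ (∑ i, a i)) := by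
    intro a
    by_cases ha : a ∈ S
    · have h2 : 2 ≤ ∑ i, a i := by
        calc 2 ≤ (Finset.univ.filter fun i => 0 < a i).card := hpos2 a ha
          _ = ∑ _i ∈ Finset.univ.filter fun i => 0 < a i, 1 :=
              Finset.card_eq_sum_ones _
          _ ≤ ∑ i ∈ Finset.univ.filter fun i => 0 < a i, a i :=
              Finset.sum_le_sum fun i hi => (Finset.mem_filter.mp hi).2
          _ ≤ ∑ i, a i :=
              Finset.sum_le_sum_of_subset (Finset.filter_subset _ _)
      have hprod : (∏ i, (ε * ρ * |lam| ^ (-w i)) ^ a i)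
          = (ε * ρ) ^ (∑ i, a i) * |lam| ^ (∑ i, (-w i) * a i) := by
        rw [Real.rpow_sum_of_pos hL0]
        rw [← Finset.prod_pow_eq_pow_sum, ← Finset.prod_mul_distrib]
        refine Finset.prod_congr rfl fun i _ => ?_
        rw [mul_pow]
        congr 1
        rw [← Real.rpow_natCast (|lam| ^ (-w i)) (a i), ← Real.rpow_mul hL0.le]
      rw [abs_mul, abs_mul, hprod, abs_mul,
        abs_of_nonneg (by positivity : (0:ℝ) ≤ (ε * ρ) ^ (∑ i, a i)),
        abs_of_nonneg (Real.rpow_nonneg hL0.le _)]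
      have hexp : |lam| * |lam| ^ (∑ i, (-w i) * a i) ≤ 1 := by
        have : |lam| * |lam| ^ (∑ i, (-w i) * a i)
            = |lam| ^ (1 + ∑ i, (-w i) * a i) := by
          rw [Real.rpow_add hL0, Real.rpow_one]
        rw [this]
        refine Real.rpow_le_one_of_one_le_of_nonpos hlam ?_
        have h1 : 1 ≤ ∑ i, (a i : ℝ) * w i := hw a ha
        have : ∑ i, (-w i) * (a i : ℝ) = -∑ i, (a i : ℝ) * w i := by
          rw [← Finset.sum_neg_distrib]
          exact Finset.sum_congr rfl fun i _ => by ring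
        rw [this]; linarith
      have hδ : (ε * ρ) ^ (∑ i, a i) ≤ ε ^ 2 * ρ ^ (∑ i, a i) := by
        rw [mul_pow]
        refine mul_le_mul_of_nonneg_right ?_ (by positivity)
        exact pow_le_pow_of_le_one hε0.le hε1 h2
      calc |lam| * (|c a| * ((ε * ρ) ^ (∑ i, a i) * |lam| ^ (∑ i, (-w i) * a i)))
          = |c a| * (ε * ρ) ^ (∑ i, a i) * (|lam| * |lam| ^ (∑ i, (-w i) * a i)) := by
            ring
        _ ≤ |c a| * (ε * ρ) ^ (∑ i, a i) * 1 :=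
            mul_le_mul_of_nonneg_left hexp (by positivity)
        _ = |c a| * (ε * ρ) ^ (∑ i, a i) := mul_one _
        _ ≤ |c a| * (ε ^ 2 * ρ ^ (∑ i, a i)) :=
            mul_le_mul_of_nonneg_left hδ (abs_nonneg _)
        _ = ε ^ 2 * (|c a| * ρ ^ (∑ i, a i)) := by ring
    · have : c a = 0 := by
        by_contra h; exact ha ((hsupp a).mp h)
      simp only [this, zero_mul, mul_zero, abs_zero]
      positivity
  have hsum2 : Summable fun a : Fin d → ℕ => ε ^ 2 * (|c a| * ρ ^ (∑ i, a i)) :=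
    hconv.mul_left _
  have hsumg : Summable fun a : Fin d → ℕ =>
      |lam * (c a * ∏ i, (ε * ρ * |lam| ^ (-w i)) ^ a i)| :=
    hsum2.of_nonneg_of_le (fun a => abs_nonneg _) key
  have habs : |lam * ∑' a : Fin d → ℕ, c a * ∏ i, (ε * ρ * |lam| ^ (-w i)) ^ a i|
      ≤ ∑' a : Fin d → ℕ, |lam * (c a * ∏ i, (ε * ρ * |lam| ^ (-w i)) ^ a i)| := by
    rw [← tsum_mul_left]
    exact abs_tsum_le_tsum_abs' hsumg
  have hεB : ε ≤ (1 / 10 ^ 10) / (C + 1) := min_le_right _ _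
  calc |lam * ∑' a : Fin d → ℕ, c a * ∏ i, (ε * ρ * |lam| ^ (-w i)) ^ a i|
      ≤ ∑' a : Fin d → ℕ, |lam * (c a * ∏ i, (ε * ρ * |lam| ^ (-w i)) ^ a i)| := habs
    _ ≤ ∑' a : Fin d → ℕ, ε ^ 2 * (|c a| * ρ ^ (∑ i, a i)) :=
        Summable.tsum_le_tsum key hsumg hsum2
    _ = ε ^ 2 * C := by rw [tsum_mul_left]
    _ ≤ 1 / 10 ^ 10 := by
        have h1 : ε * (C + 1) ≤ 1 / 10 ^ 10 := (le_div_iff₀ (by positivity)).mp hεB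
        have h2 : ε ^ 2 * C ≤ ε * C :=
          mul_le_mul_of_nonneg_right (by nlinarith) hC0
        nlinarith
end
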